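/- arXiv:1704.02267 — 3 statements merged into one kernel-verified Lean document; each statement's English description precedes it below -/
import Mathlib

section
/- The TBT matrix T satisfies the matrix identity A_1 T − T A_1^* = i·(M_{11} M_{21} + M_{31} M_{41}). -/
open Matrix

noncomputable section

/-- The scalar sequence `a_r`: `0` for `r < 0`, `i/2` for `r = 0`, `i` for `r > 0`. -/
def aC (r : ℤ) : ℂ := if r < 0 then 0 else if r = 0 then Complex.I / 2 else Complex.I

/-- `A_1`: block matrix `{𝒜_{1,p−q}}` with blocks `0`, `(i/2)I_m`, `i·I_m`. -/
def A1 (m n : ℕ) : Matrix (Fin n × Fin m) (Fin n × Fin m) ℂ :=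
  Matrix.of fun r c => if r.2 = c.2 then aC (((r.1 : ℕ) : ℤ) - ((c.1 : ℕ) : ℤ)) else 0

/-- `A_2 = diag{𝒜_{2,0}, …, 𝒜_{2,0}}`. -/
def A2 (m n : ℕ) : Matrix (Fin n × Fin m) (Fin n × Fin m) ℂ :=
  Matrix.of fun r c => if r.1 = c.1 then aC (((r.2 : ℕ) : ℤ) - ((c.2 : ℕ) : ℤ)) else 0

/-- `𝒜_1 = {a_{j−ℓ}}_{j,ℓ=1}^n`. -/
def calA1 (n : ℕ) : Matrix (Fin n) (Fin n) ℂ :=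
  Matrix.of fun p q => aC (((p : ℕ) : ℤ) - ((q : ℕ) : ℤ))

/-- `𝒜_2 = {a_{j−ℓ}}_{j,ℓ=1}^m`. -/
def calA2 (m : ℕ) : Matrix (Fin m) (Fin m) ℂ :=
  Matrix.of fun j l => aC (((j : ℕ) : ℤ) - ((l : ℕ) : ℤ))

/-- The Toeplitz-block Toeplitz matrix `T`, entry `t_{p−q}^{(j−ℓ)}`. -/
def TBT (m n : ℕ) (t : ℤ → ℤ → ℂ) : Matrix (Fin n × Fin m) (Fin n × Fin m) ℂ :=
  Matrix.of fun r c =>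
    t (((r.1 : ℕ) : ℤ) - ((c.1 : ℕ) : ℤ)) (((r.2 : ℕ) : ℤ) - ((c.2 : ℕ) : ℤ))

/-- `M_{11}`: block column, `p`-th block `(1/2)𝒯_0 + Σ_{s=1}^{p−1} 𝒯_s`. -/
def M11 (m n : ℕ) (t : ℤ → ℤ → ℂ) : Matrix (Fin n × Fin m) (Fin m) ℂ :=
  Matrix.of fun r l => (1 / 2 : ℂ) * t 0 (((r.2 : ℕ) : ℤ) - ((l : ℕ) : ℤ))
    + ∑ s ∈ Finset.range (r.1 : ℕ), t ((s : ℤ) + 1) (((r.2 : ℕ) : ℤ) - ((l : ℕ) : ℤ))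

/-- `M_{21} = [I_m I_m … I_m]`. -/
def M21 (m n : ℕ) : Matrix (Fin m) (Fin n × Fin m) ℂ :=
  Matrix.of fun j c => if j = c.2 then 1 else 0

/-- `M_{31} = M_{21}^*`. -/
def M31 (m n : ℕ) : Matrix (Fin n × Fin m) (Fin m) ℂ := (M21 m n)ᴴ

/-- `M_{41}`: block row, `q`-th block `(1/2)𝒯_0 + Σ_{s=1}^{q−1} 𝒯_{−s}`. -/
def M41 (m n : ℕ) (t : ℤ → ℤ → ℂ) : Matrix (Fin m) (Fin n × Fin m) ℂ :=
  Matrix.of fun j c => (1 / 2 : ℂ) * t 0 (((j : ℕ) : ℤ) - ((c.2 : ℕ) : ℤ))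
    + ∑ s ∈ Finset.range (c.1 : ℕ), t (-((s : ℤ) + 1)) (((j : ℕ) : ℤ) - ((c.2 : ℕ) : ℤ))

/-- `j`-th entry of the column `ℳ_{12}^{(r)}`. -/
def m12e (m : ℕ) (t : ℤ → ℤ → ℂ) (r : ℤ) (j : Fin m) : ℂ :=
  (1 / 2 : ℂ) * t r 0 + ∑ s ∈ Finset.range (j : ℕ), t r ((s : ℤ) + 1)

/-- `ℓ`-th entry of the row `ℳ_{42}^{(r)}`. -/
def m42e (m : ℕ) (t : ℤ → ℤ → ℂ) (r : ℤ) (l : Fin m) : ℂ :=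
  (1 / 2 : ℂ) * t r 0 + ∑ s ∈ Finset.range (l : ℕ), t r (-((s : ℤ) + 1))

/-- `M_{12} = {ℳ_{12}^{(p−q)}}`. -/
def M12 (m n : ℕ) (t : ℤ → ℤ → ℂ) : Matrix (Fin n × Fin m) (Fin n) ℂ :=
  Matrix.of fun r q => m12e m t (((r.1 : ℕ) : ℤ) - ((q : ℕ) : ℤ)) r.2

/-- `M_{22}`. -/
def M22 (m n : ℕ) : Matrix (Fin n) (Fin n × Fin m) ℂ :=
  Matrix.of fun p c => if p = c.1 then 1 else 0

/-- `M_{32} = M_{22}^*`. -/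
def M32 (m n : ℕ) : Matrix (Fin n × Fin m) (Fin n) ℂ := (M22 m n)ᴴ

/-- `M_{42} = {ℳ_{42}^{(p−q)}}`. -/
def M42 (m n : ℕ) (t : ℤ → ℤ → ℂ) : Matrix (Fin n) (Fin n × Fin m) ℂ :=
  Matrix.of fun p c => m42e m t (((p : ℕ) : ℤ) - ((c.1 : ℕ) : ℤ)) c.2

/-- `K`: the `1×mn` row, `q`-th block `(1/2)ℳ_{42}^{(0)} + Σ_{s=1}^{q−1} ℳ_{42}^{(−s)}`. -/
def Krow (m n : ℕ) (t : ℤ → ℤ → ℂ) : (Fin n × Fin m) → ℂ :=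
  fun c => (1 / 2 : ℂ) * m42e m t 0 c.2
    + ∑ s ∈ Finset.range (c.1 : ℕ), m42e m t (-((s : ℤ) + 1)) c.2

/-- `K_{11}`: `p`-th row `(1/2)ℳ_{42}^{(0)} + Σ_{s=1}^{p−1} ℳ_{42}^{(s)}`. -/
def K11 (m n : ℕ) (t : ℤ → ℤ → ℂ) : Matrix (Fin n) (Fin m) ℂ :=
  Matrix.of fun p l => (1 / 2 : ℂ) * m42e m t 0 l
    + ∑ s ∈ Finset.range (p : ℕ), m42e m t ((s : ℤ) + 1) l

/-- `K_{12}`: `q`-th column `(1/2)ℳ_{12}^{(0)} + Σ_{s=1}^{q−1} ℳ_{12}^{(−s)}`. -/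
def K12 (m n : ℕ) (t : ℤ → ℤ → ℂ) : Matrix (Fin m) (Fin n) ℂ :=
  Matrix.of fun j q => (1 / 2 : ℂ) * m12e m t 0 j
    + ∑ s ∈ Finset.range (q : ℕ), m12e m t (-((s : ℤ) + 1)) j

/-- `Π_1 = [M_{11} M_{31}]`. -/
def Pi1 (m n : ℕ) (t : ℤ → ℤ → ℂ) : Matrix (Fin n × Fin m) (Fin m ⊕ Fin m) ℂ :=
  fromCols (M11 m n t) (M31 m n)

/-- `Π_2 = [M_{12} M_{32}]`. -/
def Pi2 (m n : ℕ) (t : ℤ → ℤ → ℂ) : Matrix (Fin n × Fin m) (Fin n ⊕ Fin n) ℂ :=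
  fromCols (M12 m n t) (M32 m n)

/-- `Π̂_1 = col[M_{21}; M_{41}]`. -/
def PiHat1 (m n : ℕ) (t : ℤ → ℤ → ℂ) : Matrix (Fin m ⊕ Fin m) (Fin n × Fin m) ℂ :=
  fromRows (M21 m n) (M41 m n t)

/-- `Π̂_2 = col[M_{22}; M_{42}]`. -/
def PiHat2 (m n : ℕ) (t : ℤ → ℤ → ℂ) : Matrix (Fin n ⊕ Fin n) (Fin n × Fin m) ℂ :=
  fromRows (M22 m n) (M42 m n t)

/-- All-ones vector. -/
def onesV (k : Type*) : k → ℂ := fun _ => 1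

/-- `g_{12} = i·Π̂_1 T^{-1} Π_2 − i·[[𝟏_m 𝟏_n^*, 0],[K_{12}, 0]]`. -/
def g12M (m n : ℕ) (t : ℤ → ℤ → ℂ) : Matrix (Fin m ⊕ Fin m) (Fin n ⊕ Fin n) ℂ :=
  Complex.I • (PiHat1 m n t * (TBT m n t)⁻¹ * Pi2 m n t)
    - Complex.I • fromBlocks (vecMulVec (onesV (Fin m)) (onesV (Fin n))) 0 (K12 m n t) 0

/-- `g_{21} = i·Π̂_2 T^{-1} Π_1 − i·[[𝟏_n 𝟏_m^*, 0],[K_{11}, 0]]`. -/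
def g21M (m n : ℕ) (t : ℤ → ℤ → ℂ) : Matrix (Fin n ⊕ Fin n) (Fin m ⊕ Fin m) ℂ :=
  Complex.I • (PiHat2 m n t * (TBT m n t)⁻¹ * Pi1 m n t)
    - Complex.I • fromBlocks (vecMulVec (onesV (Fin n)) (onesV (Fin m))) 0 (K11 m n t) 0

/-- The `k×k` flip (anti-diagonal) matrix. -/
def flipU (k : ℕ) : Matrix (Fin k) (Fin k) ℂ :=
  Matrix.of fun p q => if (p : ℕ) + (q : ℕ) + 1 = k then 1 else 0

/-- `U_{2k}`, the `2k×2k` flip matrix on the sum type. -/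
def U2 (k : ℕ) : Matrix (Fin k ⊕ Fin k) (Fin k ⊕ Fin k) ℂ :=
  fromBlocks 0 (flipU k) (flipU k) 0

/-- `J_{2k} = diag{I_k, −I_k}`. -/
def J2 (k : ℕ) : Matrix (Fin k ⊕ Fin k) (Fin k ⊕ Fin k) ℂ :=
  fromBlocks 1 0 0 (-1)

/-- `U = U_{mn}`, the `mn×mn` flip matrix (global index `m·p + j`). -/
def UmnM (m n : ℕ) : Matrix (Fin n × Fin m) (Fin n × Fin m) ℂ :=
  Matrix.of fun r c =>
    if m * (r.1 : ℕ) + (r.2 : ℕ) + (m * (c.1 : ℕ) + (c.2 : ℕ)) + 1 = m * n then 1 else 0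

/-- `ψ(λ) = (λ + i/2)/(λ − i/2)`. -/
def psiM (l : ℂ) : ℂ := (l + Complex.I / 2) / (l - Complex.I / 2)

/-- `h(y_1, y_2)`, entry `y_1^{p−1} y_2^{j−1}`. -/
def hVec (m n : ℕ) (y1 y2 : ℂ) : (Fin n × Fin m) → ℂ :=
  fun r => y1 ^ (r.1 : ℕ) * y2 ^ (r.2 : ℕ)

/-- `ω(λ,μ) = 𝟏^*(A_1^*−μ_1)^{-1}(A_2^*−μ_2)^{-1}T^{-1}(A_2−λ_2)^{-1}(A_1−λ_1)^{-1}𝟏`. -/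
def omegaF (m n : ℕ) (t : ℤ → ℤ → ℂ) (l1 l2 u1 u2 : ℂ) : ℂ :=
  star (onesV (Fin n × Fin m)) ⬝ᵥ
    ((((A1 m n)ᴴ - u1 • 1)⁻¹ * ((A2 m n)ᴴ - u2 • 1)⁻¹ * (TBT m n t)⁻¹ *
      (A2 m n - l2 • 1)⁻¹ * (A1 m n - l1 • 1)⁻¹) *ᵥ onesV (Fin n × Fin m))

/-- `ρ(y,z) = h(conj z_1, conj z_2)^* T^{-1} h(y_1,y_2)`. -/
def rhoF (m n : ℕ) (t : ℤ → ℤ → ℂ) (y1 y2 z1 z2 : ℂ) : ℂ :=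
  star (hVec m n ((starRingEnd ℂ) z1) ((starRingEnd ℂ) z2)) ⬝ᵥ
    ((TBT m n t)⁻¹ *ᵥ hVec m n y1 y2)

/-- `Γ_1 = T^{-1}Π_1`. -/
def Gam1 (m n : ℕ) (t : ℤ → ℤ → ℂ) : Matrix (Fin n × Fin m) (Fin m ⊕ Fin m) ℂ :=
  (TBT m n t)⁻¹ * Pi1 m n t

/-- `Γ_2 = T^{-1}Π_2`. -/
def Gam2 (m n : ℕ) (t : ℤ → ℤ → ℂ) : Matrix (Fin n × Fin m) (Fin n ⊕ Fin n) ℂ :=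
  (TBT m n t)⁻¹ * Pi2 m n t

/-- `Γ̂_1 = Π̂_1 T^{-1}`. -/
def GamHat1 (m n : ℕ) (t : ℤ → ℤ → ℂ) : Matrix (Fin m ⊕ Fin m) (Fin n × Fin m) ℂ :=
  PiHat1 m n t * (TBT m n t)⁻¹

/-- `Γ̂_2 = Π̂_2 T^{-1}`. -/
def GamHat2 (m n : ℕ) (t : ℤ → ℤ → ℂ) : Matrix (Fin n ⊕ Fin n) (Fin n × Fin m) ℂ :=
  PiHat2 m n t * (TBT m n t)⁻¹

/-- `Γ = [Γ_1 Γ_2]`. -/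
def GammaFull (m n : ℕ) (t : ℤ → ℤ → ℂ) :
    Matrix (Fin n × Fin m) ((Fin m ⊕ Fin m) ⊕ (Fin n ⊕ Fin n)) ℂ :=
  fromCols (Gam1 m n t) (Gam2 m n t)

/-- `Γ̂ = col[Γ̂_1; Γ̂_2]`. -/
def GammaHatFull (m n : ℕ) (t : ℤ → ℤ → ℂ) :
    Matrix ((Fin m ⊕ Fin m) ⊕ (Fin n ⊕ Fin n)) (Fin n × Fin m) ℂ :=
  fromRows (GamHat1 m n t) (GamHat2 m n t)

/-- The row vector `u(μ)`. -/
def uRow (m n : ℕ) (t : ℤ → ℤ → ℂ) (u1 u2 : ℂ) :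
    ((Fin m ⊕ Fin m) ⊕ (Fin n ⊕ Fin n)) → ℂ :=
  star (onesV (Fin n × Fin m)) ᵥ*
      (((A1 m n)ᴴ - u1 • 1)⁻¹ * ((A2 m n)ᴴ - u2 • 1)⁻¹ * GammaFull m n t)
    - Complex.I • Sum.elim
        (Sum.elim (star (onesV (Fin m)) ᵥ* ((calA2 m)ᴴ - u2 • 1)⁻¹) (0 : Fin m → ℂ))
        (Sum.elim (star (onesV (Fin n)) ᵥ* ((calA1 n)ᴴ - u1 • 1)⁻¹) (0 : Fin n → ℂ))

/-- The column vector `û(λ)`. -/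
def uHatCol (m n : ℕ) (t : ℤ → ℤ → ℂ) (l1 l2 : ℂ) :
    ((Fin m ⊕ Fin m) ⊕ (Fin n ⊕ Fin n)) → ℂ :=
  (GammaHatFull m n t * (A2 m n - l2 • 1)⁻¹ * (A1 m n - l1 • 1)⁻¹) *ᵥ onesV (Fin n × Fin m)
    + Complex.I • Sum.elim
        (Sum.elim (0 : Fin m → ℂ) ((calA2 m - l2 • 1)⁻¹ *ᵥ onesV (Fin m)))
        (Sum.elim (0 : Fin n → ℂ) ((calA1 n - l1 • 1)⁻¹ *ᵥ onesV (Fin n)))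

/-- `P_1 = diag{I_{2m}, 0}`. -/
def P1M (m n : ℕ) :
    Matrix ((Fin m ⊕ Fin m) ⊕ (Fin n ⊕ Fin n)) ((Fin m ⊕ Fin m) ⊕ (Fin n ⊕ Fin n)) ℂ :=
  fromBlocks 1 0 0 0

/-- `P_2 = I − P_1`. -/
def P2M (m n : ℕ) :
    Matrix ((Fin m ⊕ Fin m) ⊕ (Fin n ⊕ Fin n)) ((Fin m ⊕ Fin m) ⊕ (Fin n ⊕ Fin n)) ℂ :=
  1 - P1M m n

/-- `G(λ)`, built from `g_{12}` and `g_{21}`. -/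
def GMat (m n : ℕ) (g12 : Matrix (Fin m ⊕ Fin m) (Fin n ⊕ Fin n) ℂ)
    (g21 : Matrix (Fin n ⊕ Fin n) (Fin m ⊕ Fin m) ℂ) (l1 l2 : ℂ) :
    Matrix ((Fin m ⊕ Fin m) ⊕ (Fin n ⊕ Fin n)) ((Fin m ⊕ Fin m) ⊕ (Fin n ⊕ Fin n)) ℂ :=
  fromBlocks (fromBlocks (calA2 m - l2 • 1) 0 0 (calA2 m - l2 • 1)) g12
             g21 (fromBlocks (calA1 n - l1 • 1) 0 0 (calA1 n - l1 • 1))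

/-- `G` as a matrix over the polynomial ring `ℂ[λ_1, λ_2]` (variables `X 0 = λ_1`, `X 1 = λ_2`). -/
def GPoly (m n : ℕ) (g12 : Matrix (Fin m ⊕ Fin m) (Fin n ⊕ Fin n) ℂ)
    (g21 : Matrix (Fin n ⊕ Fin n) (Fin m ⊕ Fin m) ℂ) :
    Matrix ((Fin m ⊕ Fin m) ⊕ (Fin n ⊕ Fin n)) ((Fin m ⊕ Fin m) ⊕ (Fin n ⊕ Fin n))
      (MvPolynomial (Fin 2) ℂ) :=
  fromBlocks
    (fromBlocks ((calA2 m).map MvPolynomial.C - (MvPolynomial.X 1 : MvPolynomial (Fin 2) ℂ) • 1) 0 0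
      ((calA2 m).map MvPolynomial.C - (MvPolynomial.X 1 : MvPolynomial (Fin 2) ℂ) • 1))
    (g12.map MvPolynomial.C)
    (g21.map MvPolynomial.C)
    (fromBlocks ((calA1 n).map MvPolynomial.C - (MvPolynomial.X 0 : MvPolynomial (Fin 2) ℂ) • 1) 0 0
      ((calA1 n).map MvPolynomial.C - (MvPolynomial.X 0 : MvPolynomial (Fin 2) ℂ) • 1))

/-- The vector `col[0_m; 𝟏_m; 0_n; 𝟏_n]`. -/
def eVec (m n : ℕ) : ((Fin m ⊕ Fin m) ⊕ (Fin n ⊕ Fin n)) → ℂ :=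
  Sum.elim (Sum.elim (0 : Fin m → ℂ) (onesV (Fin m))) (Sum.elim (0 : Fin n → ℂ) (onesV (Fin n)))

/-- `diag{J_{2m}U_{2m}, J_{2n}U_{2n}}`. -/
def DJU (m n : ℕ) :
    Matrix ((Fin m ⊕ Fin m) ⊕ (Fin n ⊕ Fin n)) ((Fin m ⊕ Fin m) ⊕ (Fin n ⊕ Fin n)) ℂ :=
  fromBlocks (J2 m * U2 m) 0 0 (J2 n * U2 n)

/-- The block column `col[I_m; I_m; …; I_m]`. -/
def EcolId (m n : ℕ) : Matrix (Fin n × Fin m) (Fin m) ℂ :=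
  Matrix.of fun r l => if r.2 = l then 1 else 0

/-!
Since `A_1 = 𝒜_1 ⊗ I_m` with `𝒜_1` lower triangular (`i/2` on the diagonal, `i` below it), the
entry of `A_1 T − T A_1^*` in row `(p, j)` and column `(q, l)` is `i` times
`f (p − q) + ∑_{s<p} f (s − q) + ∑_{s<q} f (p − s)`, where `f r = t_r^{(j−l)}`, while the same entry
of the right-hand side is `i` times `f 0 + ∑_{s=1}^{p} f s + ∑_{s=1}^{q} f (−s)`. Telescoping against
a discrete primitive of `f` evaluates both to `∑_{r=−q}^{p} f r`.
-/

open Finset Complex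

section DiscretePrimitive

variable {M : Type*} [AddCommGroup M]

theorem exists_forall_add_one_sub_eq (f : ℤ → M) : ∃ F : ℤ → M, ∀ r, F (r + 1) - F r = f r := by
  refine ⟨fun r => ∑ x ∈ Ico 0 r, f x - ∑ x ∈ Ico r 0, f x, fun r => ?_⟩
  dsimp only
  rcases le_or_gt 0 r with hr | hr
  · simp only [Ico_eq_empty_of_le hr, Ico_eq_empty_of_le (by omega : (0 : ℤ) ≤ r + 1),
      sum_empty, sub_zero, ← sum_Ico_add_eq_sum_Ico_add_one hr, add_sub_cancel_left]
  · rw [Ico_eq_empty_of_le hr.le, Ico_eq_empty_of_le (by omega : r + 1 ≤ 0),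
      ← add_sum_Ioo_eq_sum_Ico hr, ← Ico_add_one_left_eq_Ioo]
    abel

variable {f F : ℤ → M}

theorem sum_range_natCast_add_eq_sub (hF : ∀ r, F (r + 1) - F r = f r) (a : ℤ) (k : ℕ) :
    ∑ s ∈ range k, f (s + a) = F (k + a) - F a := by
  induction k with
  | zero => simp
  | succ k ih =>
    rw [sum_range_succ, ih, ← hF, Nat.cast_succ, add_right_comm]
    abel

theorem sum_range_sub_natCast_eq_sub (hF : ∀ r, F (r + 1) - F r = f r) (a : ℤ) (k : ℕ) :
    ∑ s ∈ range k, f (a - s) = F (a + 1) - F (a + 1 - k) := by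
  induction k with
  | zero => simp
  | succ k ih =>
    rw [sum_range_succ, ih, ← hF, Nat.cast_succ, show a - k + 1 = a + 1 - k by ring,
      show a - k = a + 1 - (k + 1) by ring]
    abel

theorem sum_interval_two_ways (f : ℤ → M) (p q : ℕ) :
    f (p - q) + ∑ s ∈ range p, f (s - q) + ∑ s ∈ range q, f (p - s)
      = f 0 + ∑ s ∈ range p, f (s + 1) + ∑ s ∈ range q, f (-(s + 1)) := by
  obtain ⟨F, hF⟩ := exists_forall_add_one_sub_eq f
  have hlow : ∑ s ∈ range p, f (s - q) = F (p - q) - F (-q) := by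
    simpa only [← sub_eq_add_neg] using sum_range_natCast_add_eq_sub hF (-q) p
  have hneg : ∑ s ∈ range q, f (-(s + 1)) = F 0 - F (-q) := by
    simpa only [neg_add_rev, ← sub_eq_add_neg, neg_add_cancel, zero_sub]
      using sum_range_sub_natCast_eq_sub hF (-1) q
  rw [hlow, hneg, sum_range_natCast_add_eq_sub hF 1 p, sum_range_sub_natCast_eq_sub hF p q,
    ← hF, ← hF, zero_add, show (p : ℤ) + 1 - q = p - q + 1 by ring]
  abel

end DiscretePrimitive

theorem aC_of_neg {r : ℤ} (hr : r < 0) : aC r = 0 := if_pos hr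

theorem aC_zero : aC 0 = I / 2 := rfl

theorem aC_of_pos {r : ℤ} (hr : 0 < r) : aC r = I := by
  simp [aC, hr.not_gt, hr.ne']

theorem star_aC (r : ℤ) : star (aC r) = -aC r := by
  unfold aC
  split_ifs <;> simp [neg_div]

theorem sum_aC_mul {n : ℕ} (p : Fin n) (g : ℤ → ℂ) :
    ∑ x : Fin n, aC ((p : ℕ) - (x : ℕ)) * g (x : ℕ)
      = I / 2 * g (p : ℕ) + I * ∑ s ∈ range p, g s := by
  have hafter : ∑ x ∈ Ico ((p : ℕ) + 1) n, aC ((p : ℕ) - (x : ℕ)) * g x = 0 :=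
    sum_eq_zero fun x hx => by
      rw [mem_Ico] at hx
      rw [aC_of_neg (by omega), zero_mul]
  have hbefore : ∀ s ∈ range p, aC ((p : ℕ) - (s : ℕ)) * g s = I * g s := fun s hs => by
    rw [mem_range] at hs
    rw [aC_of_pos (by omega)]
  rw [Fin.sum_univ_eq_sum_range (fun x => aC ((p : ℕ) - (x : ℕ)) * g x),
    ← sum_range_add_sum_Ico _ p.isLt, hafter, add_zero, sum_range_succ, sum_congr rfl hbefore,
    sub_self, aC_zero, mul_sum, add_comm]

theorem A1_mul_apply {m n : ℕ} {ι : Type*} (B : Matrix (Fin n × Fin m) ι ℂ) (p : Fin n)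
    (j : Fin m) (c : ι) :
    (A1 m n * B) (p, j) c = ∑ x : Fin n, aC ((p : ℕ) - (x : ℕ)) * B (x, j) c := by
  simp [A1, mul_apply, Fintype.sum_prod_type, ite_mul]

theorem mul_A1_conjTranspose_apply {m n : ℕ} {ι : Type*} (B : Matrix ι (Fin n × Fin m) ℂ)
    (r : ι) (q : Fin n) (l : Fin m) :
    (B * (A1 m n)ᴴ) r (q, l) = -∑ x : Fin n, aC ((q : ℕ) - (x : ℕ)) * B r (x, l) := by
  simp [A1, mul_apply, Fintype.sum_prod_type, apply_ite (star : ℂ → ℂ), star_aC, mul_comm]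

theorem mul_M21_apply {m n : ℕ} {ι : Type*} (B : Matrix ι (Fin m) ℂ) (r : ι) (c : Fin n × Fin m) :
    (B * M21 m n) r c = B r c.2 := by
  simp [M21, mul_apply]

theorem M31_mul_apply {m n : ℕ} {ι : Type*} (B : Matrix (Fin m) ι ℂ) (r : Fin n × Fin m) (c : ι) :
    (M31 m n * B) r c = B r.2 c := by
  simp [M31, M21, mul_apply, apply_ite (star : ℂ → ℂ)]

theorem tbt_identity_A1_general (m n : ℕ) (t : ℤ → ℤ → ℂ) :
    A1 m n * TBT m n t - TBT m n t * (A1 m n)ᴴ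
      = Complex.I • (M11 m n t * M21 m n + M31 m n * M41 m n t) := by
  ext ⟨p, j⟩ ⟨q, l⟩
  rw [Matrix.sub_apply, A1_mul_apply, mul_A1_conjTranspose_apply, Matrix.smul_apply,
    Matrix.add_apply, mul_M21_apply, M31_mul_apply]
  simp only [TBT, M11, M41, of_apply, smul_eq_mul]
  rw [sum_aC_mul p fun x => t (x - q) (j - l), sum_aC_mul q fun x => t (p - x) (j - l)]
  linear_combination I * sum_interval_two_ways (fun r => t r (j - l)) p q

/-- `A_1 T − T A_1^* = i(M_{11}M_{21} + M_{31}M_{41})`. -/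
theorem tbt_identity_A1 (m n : ℕ) (hm : 0 < m) (hn : 0 < n) (t : ℤ → ℤ → ℂ) :
    A1 m n * TBT m n t - TBT m n t * (A1 m n)ᴴ
      = Complex.I • (M11 m n t * M21 m n + M31 m n * M41 m n t) :=
  tbt_identity_A1_general m n t

end
end

section
/- For the TBT matrix T, the matrices Q_1 = A_1 T − T A_1^* and Q_2 = A_2 T − T A_2^* satisfy rank(Q_1) ≤ 2m and rank(Q_2) ≤ 2n. -/
/-!
Let `S` be the block down-shift `(p, j) ↦ (p + 1, j)` and `W = (1 - S)⁻¹` the block lower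
triangular matrix whose blocks on and below the diagonal are `I_m`. Then `A₁ = i (W - 1/2)`,
i.e. `A₁` is the Cayley transform `(i/2)(1 + S)(1 - S)⁻¹`, and a direct computation gives
`A₁ T - T A₁* = i W (T - S T S*) W*`. Since `T` is invariant under shifting both block indices,
`T - S T S*` vanishes outside the first block row and the first block column, so its rank is at
most `2m`. Swapping the two tensor factors of the index set exchanges `A₂` with `A₁` and turns a
TBT matrix into another one, which gives the bound for `Q₂`.
-/

open Matrix

noncomputable section

open Finset

namespace PEquiv

variable {ι α : Type*} [DecidableEq ι]

theorem conjTranspose_toMatrix [NonAssocSemiring α] [StarRing α] (f : ι ≃. ι) :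
    (f.toMatrix : Matrix ι ι α)ᴴ = f.toMatrixᵀ := by
  ext i j
  by_cases h : i ∈ f j <;> simp [h]

theorem toMatrix_mul_mul_transpose_apply [Fintype ι] [NonAssocSemiring α] (f : ι ≃. ι)
    (T : Matrix ι ι α) {r c a b : ι} (ha : f r = some a) (hb : f c = some b) :
    (f.toMatrix * T * f.toMatrixᵀ : Matrix ι ι α) r c = T a b := by
  rw [← toMatrix_symm, mul_toMatrix_apply, symm_symm, hb]
  change (f.toMatrix * T : Matrix ι ι α) r b = T a b
  rw [toMatrix_mul_apply, ha]

end PEquiv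

namespace Matrix

variable {ι κ K : Type*} [Fintype κ] [Field K]

theorem rank_add_le (A B : Matrix ι κ K) : (A + B).rank ≤ A.rank + B.rank := by
  rw [rank, rank, rank, mulVecLin_add]
  exact (Submodule.finrank_mono (LinearMap.range_add_le _ _)).trans
    (Submodule.finrank_add_le_finrank_add_finrank _ _)

theorem rank_le_card_add_card_of_support [Fintype ι] [DecidableEq ι] (M : Matrix ι κ K)
    (R : Finset ι) (C : Finset κ) (hM : ∀ r c, M r c ≠ 0 → r ∈ R ∨ c ∈ C) :
    M.rank ≤ #R + #C := by
  set M₁ : Matrix ι κ K := of fun r c => if r ∈ R then M r c else 0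
  have hM₁ : M₁.rank ≤ #R := by
    refine rank_le_card_of_support_subset _ R fun r hr => ?_
    by_contra h
    exact hr (funext fun c => by simp [M₁, Matrix.row, mem_coe.not.1 h])
  have hM₂ : (M - M₁).rank ≤ #C := by
    rw [← rank_transpose]
    refine rank_le_card_of_support_subset _ C fun c hc => ?_
    by_contra h
    refine hc (funext fun r => ?_)
    by_cases hr : r ∈ R
    · simp [M₁, Matrix.row, hr]
    · simpa [M₁, Matrix.row, hr] using not_imp_comm.1 (hM r c) (by tauto)
  calc M.rank = (M₁ + (M - M₁)).rank := by rw [add_sub_cancel]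
    _ ≤ #R + #C := (rank_add_le _ _).trans (add_le_add hM₁ hM₂)

theorem rank_sub_toMatrix_mul_mul_transpose_le [Fintype ι] [DecidableEq ι] (f : ι ≃. ι)
    (T : Matrix ι ι K) (hT : ∀ r c a b, f r = some a → f c = some b → T a b = T r c) :
    (T - f.toMatrix * T * f.toMatrixᵀ).rank ≤ 2 * #{r | f r = none} := by
  rw [two_mul]
  refine rank_le_card_add_card_of_support _ _ _ fun r c hrc => ?_
  simp only [mem_filter, mem_univ, true_and]
  by_contra! h
  obtain ⟨a, ha⟩ := Option.ne_none_iff_exists'.1 h.1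
  obtain ⟨b, hb⟩ := Option.ne_none_iff_exists'.1 h.2
  rw [sub_apply, f.toMatrix_mul_mul_transpose_apply T ha hb, hT r c a b ha hb, sub_self] at hrc
  exact hrc rfl

end Matrix

theorem mul_sub_mul_star_of_mul_eq_sub_one {R : Type*} [Ring R] [StarRing R] [Algebra ℂ R]
    [StarModule ℂ R] {A W S : R} (hA : A = Complex.I • (W - (2⁻¹ : ℂ) • 1))
    (hW : W * S = W - 1) (T : R) :
    A * T - T * star A = Complex.I • (W * (T - S * T * star S) * star W) := by
  have hd : W * (T - S * T * star S) * star W = W * T + T * star W - T :=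
    calc _ = W * T * star W - W * S * T * star (W * S) := by rw [star_mul]; noncomm_ring
      _ = _ := by rw [hW, star_sub, star_one]; noncomm_ring
  rw [hd, hA, star_smul, star_sub, star_smul, star_one, Complex.star_def, Complex.conj_I]
  simp only [sub_mul, mul_sub, smul_mul_assoc, mul_smul_comm, one_mul, mul_one, map_inv₀,
    map_ofNat]
  module

def blockShift (m n : ℕ) : (Fin n × Fin m) ≃. (Fin n × Fin m) where
  toFun r := if h : (r.1 : ℕ) = 0 then none else some (⟨r.1 - 1, by omega⟩, r.2)
  invFun r := if h : (r.1 : ℕ) + 1 < n then some (⟨r.1 + 1, h⟩, r.2) else none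
  inv r c := by
    obtain ⟨⟨p, hp⟩, j⟩ := r
    obtain ⟨⟨q, hq⟩, l⟩ := c
    by_cases hq' : q + 1 < n <;> by_cases hp' : p = 0 <;>
      simp [hq', hp', Prod.ext_iff, Fin.ext_iff] <;> omega

theorem blockShift_eq_none_iff {m n : ℕ} {r : Fin n × Fin m} :
    blockShift m n r = none ↔ (r.1 : ℕ) = 0 := by
  simp [blockShift]

theorem card_blockShift_eq_none_le (m n : ℕ) : #{r | blockShift m n r = none} ≤ m := by
  refine (card_le_card_of_injOn Prod.snd (fun _ _ => mem_univ _) fun r hr c hc hrc => ?_).trans_eq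
    (card_fin m)
  have hr₀ := blockShift_eq_none_iff.1 (mem_filter.1 hr).2
  have hc₀ := blockShift_eq_none_iff.1 (mem_filter.1 hc).2
  exact Prod.ext (Fin.ext (hr₀.trans hc₀.symm)) hrc

def blockLowerOnes (m n : ℕ) : Matrix (Fin n × Fin m) (Fin n × Fin m) ℂ :=
  of fun r c => if r.2 = c.2 ∧ c.1 ≤ r.1 then 1 else 0

theorem blockLowerOnes_mul_blockShift (m n : ℕ) :
    blockLowerOnes m n * (blockShift m n).toMatrix = blockLowerOnes m n - 1 := by
  ext ⟨⟨p, hp⟩, j⟩ ⟨⟨q, hq⟩, l⟩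
  rw [PEquiv.mul_toMatrix_apply]
  by_cases h : q + 1 < n <;>
    simp [blockShift, PEquiv.symm, h, blockLowerOnes, one_apply] <;> split_ifs <;> grind

theorem A1_eq_smul_blockLowerOnes_sub (m n : ℕ) :
    A1 m n = Complex.I • (blockLowerOnes m n - (2⁻¹ : ℂ) • 1) := by
  ext ⟨⟨p, hp⟩, j⟩ ⟨⟨q, hq⟩, l⟩
  simp only [A1, blockLowerOnes, aC, of_apply, Matrix.smul_apply, Matrix.sub_apply, one_apply,
    Prod.ext_iff, Fin.ext_iff, Fin.le_def]
  split_ifs <;> first | (exfalso; omega) | (simp only [smul_eq_mul]; ring)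

theorem TBT_apply_of_blockShift {m n : ℕ} (t : ℤ → ℤ → ℂ) {r c a b : Fin n × Fin m}
    (ha : blockShift m n r = some a) (hb : blockShift m n c = some b) :
    TBT m n t a b = TBT m n t r c := by
  simp only [blockShift, PEquiv.coe_mk, Option.dite_none_left_eq_some, Option.some.injEq] at ha hb
  obtain ⟨hr, rfl⟩ := ha
  obtain ⟨hc, rfl⟩ := hb
  simp only [TBT, of_apply]
  congr 1
  omega

theorem rank_A1_mul_TBT_sub_le (m n : ℕ) (t : ℤ → ℤ → ℂ) :
    (A1 m n * TBT m n t - TBT m n t * (A1 m n)ᴴ).rank ≤ 2 * m := by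
  set T := TBT m n t
  set S : Matrix _ _ ℂ := (blockShift m n).toMatrix
  rw [← star_eq_conjTranspose, mul_sub_mul_star_of_mul_eq_sub_one
    (A1_eq_smul_blockLowerOnes_sub m n) (blockLowerOnes_mul_blockShift m n),
    rank_smul_of_mem_nonZeroDivisors _ (mem_nonZeroDivisors_of_ne_zero Complex.I_ne_zero)]
  calc _ ≤ (blockLowerOnes m n * (T - S * T * star S)).rank := rank_mul_le_left _ _
    _ ≤ (T - S * T * Sᵀ).rank := by
      rw [star_eq_conjTranspose, PEquiv.conjTranspose_toMatrix]
      exact rank_mul_le_right _ _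
    _ ≤ 2 * #{r | blockShift m n r = none} :=
      rank_sub_toMatrix_mul_mul_transpose_le _ _ fun _ _ _ _ => TBT_apply_of_blockShift t
    _ ≤ 2 * m := by grw [card_blockShift_eq_none_le]

theorem A2_eq_submatrix_A1 (m n : ℕ) :
    A2 m n = (A1 n m).submatrix (Equiv.prodComm _ _) (Equiv.prodComm _ _) := by
  ext
  simp [A1, A2]

theorem TBT_eq_submatrix_TBT (m n : ℕ) (t : ℤ → ℤ → ℂ) :
    TBT m n t =
      (TBT n m fun r s => t s r).submatrix (Equiv.prodComm _ _) (Equiv.prodComm _ _) := by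
  ext
  simp [TBT]

theorem A2_mul_TBT_sub_eq_submatrix (m n : ℕ) (t : ℤ → ℤ → ℂ) :
    A2 m n * TBT m n t - TBT m n t * (A2 m n)ᴴ =
      (A1 n m * TBT n m (fun r s => t s r) - TBT n m (fun r s => t s r) * (A1 n m)ᴴ).submatrix
        (Equiv.prodComm _ _) (Equiv.prodComm _ _) := by
  rw [A2_eq_submatrix_A1, TBT_eq_submatrix_TBT, conjTranspose_submatrix, submatrix_mul_equiv,
    submatrix_mul_equiv, submatrix_sub]
  rfl

theorem tbt_rank_bounds_general (m n : ℕ) (t : ℤ → ℤ → ℂ) :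
    (A1 m n * TBT m n t - TBT m n t * (A1 m n)ᴴ).rank ≤ 2 * m ∧
    (A2 m n * TBT m n t - TBT m n t * (A2 m n)ᴴ).rank ≤ 2 * n := by
  refine ⟨rank_A1_mul_TBT_sub_le m n t, ?_⟩
  rw [A2_mul_TBT_sub_eq_submatrix, rank_submatrix]
  exact rank_A1_mul_TBT_sub_le n m _

/-- `rank(Q_1) ≤ 2m` and `rank(Q_2) ≤ 2n`. -/
theorem tbt_rank_bounds (m n : ℕ) (hm : 0 < m) (hn : 0 < n) (t : ℤ → ℤ → ℂ) :
    (A1 m n * TBT m n t - TBT m n t * (A1 m n)ᴴ).rank ≤ 2 * m ∧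
    (A2 m n * TBT m n t - TBT m n t * (A2 m n)ᴴ).rank ≤ 2 * n :=
  tbt_rank_bounds_general m n t

end
end

section
/- Assume the TBT matrix T is invertible. Then for all complex λ1, λ2 ≠ i/2 and μ1, μ2 ≠ −i/2: ρ(ψ(λ1), ψ(λ2), conj(ψ(conj(μ1))), conj(ψ(conj(μ2)))) = (i/2 + μ2)(i/2 + μ1)(i/2 − λ2)(i/2 − λ1)·ω(λ, μ). -/
open Matrix

noncomputable section

/-!
`A_1 = 𝒜_1 ⊗ I_m` and `A_2 = I_n ⊗ 𝒜_2`, where `𝒜` is the lower triangular Toeplitz matrix with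
symbol `i/2 + i(z + z² + ⋯)`. Summing a geometric series shows that `𝒜 - λ` maps the vector of
powers of `ψ(λ)` to the constant vector `i/2 - λ`, since `(ψ(λ) - 1)(λ - i/2) = i`. Hence
`(A_2 - λ_2)⁻¹ (A_1 - λ_1)⁻¹ 𝟏 = h(ψ(λ_1), ψ(λ_2)) / ((i/2 - λ_1)(i/2 - λ_2))`. The two adjoint
resolvents in `ω` are the adjoints of the same resolvents at `conj μ`, so `ω` and `ρ` are the same
sesquilinear form in `T⁻¹` evaluated at proportional vectors.
-/

open scoped Kronecker

theorem sum_range_aC_mul_pow {p k : ℕ} (hp : p < k) (x : ℂ) :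
    ∑ q ∈ Finset.range k, aC ((p : ℤ) - q) * x ^ q
      = Complex.I / 2 * x ^ p + Complex.I * ∑ q ∈ Finset.range p, x ^ q := by
  have above : ∑ q ∈ Finset.Ico (p + 1) k, aC ((p : ℤ) - q) * x ^ q = 0 :=
    Finset.sum_eq_zero fun q hq => by
      have : (p : ℤ) - q < 0 := by have := (Finset.mem_Ico.mp hq).1; omega
      simp [aC, this]
  have below : ∀ q ∈ Finset.range p, aC ((p : ℤ) - q) * x ^ q = Complex.I * x ^ q := by
    intro q hq
    have hq := Finset.mem_range.mp hq
    have h₁ : ¬ (p : ℤ) - q < 0 := by omega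
    have h₂ : (p : ℤ) - q ≠ 0 := by omega
    simp [aC, h₁, h₂]
  rw [← Finset.sum_range_add_sum_Ico _ hp, above, add_zero, Finset.sum_range_succ,
    Finset.sum_congr rfl below, ← Finset.mul_sum]
  simp [aC, add_comm]

theorem psiM_sub_one_mul {l : ℂ} (hl : l ≠ Complex.I / 2) :
    (psiM l - 1) * (l - Complex.I / 2) = Complex.I := by
  have hl' : l - Complex.I / 2 ≠ 0 := sub_ne_zero.mpr hl
  rw [psiM, div_sub_one hl', div_mul_cancel₀ _ hl']
  ring

theorem calA1_sub_smul_mulVec_psiM_pow (k : ℕ) {l : ℂ} (hl : l ≠ Complex.I / 2) :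
    (calA1 k - l • 1) *ᵥ (fun q : Fin k => psiM l ^ (q : ℕ)) = fun _ => Complex.I / 2 - l := by
  ext p
  have geom : Complex.I * ∑ q ∈ Finset.range p, psiM l ^ q
      = (l - Complex.I / 2) * (psiM l ^ (p : ℕ) - 1) := by
    rw [← mul_geom_sum, ← mul_assoc, mul_comm (l - _), psiM_sub_one_mul hl]
  have row : ∑ q : Fin k, aC ((p : ℤ) - (q : ℕ)) * psiM l ^ (q : ℕ)
      = Complex.I / 2 * psiM l ^ (p : ℕ) + (l - Complex.I / 2) * (psiM l ^ (p : ℕ) - 1) := by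
    rw [Fin.sum_univ_eq_sum_range (fun q => aC ((p : ℤ) - q) * psiM l ^ q),
      sum_range_aC_mul_pow p.2, geom]
  rw [sub_mulVec, smul_mulVec, one_mulVec]
  simp only [Pi.sub_apply, Pi.smul_apply, smul_eq_mul, mulVec, dotProduct, calA1, of_apply, row]
  ring

theorem isUnit_calA1_sub_smul (k : ℕ) {l : ℂ} (hl : l ≠ Complex.I / 2) :
    IsUnit (calA1 k - l • 1) := by
  have lower : (calA1 k - l • 1).IsLowerTriangular := fun i j hij => by
    have hij : i < j := hij
    simp [calA1, aC, hij, hij.ne]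
  rw [isUnit_iff_isUnit_det, det_of_isLowerTriangular _ lower]
  simp [calA1, aC, sub_ne_zero.mpr hl.symm]

theorem calA1_sub_smul_inv_mulVec_onesV (k : ℕ) {l : ℂ} (hl : l ≠ Complex.I / 2) :
    (calA1 k - l • 1)⁻¹ *ᵥ onesV (Fin k)
      = (Complex.I / 2 - l)⁻¹ • fun q : Fin k => psiM l ^ (q : ℕ) := by
  have := (isUnit_calA1_sub_smul k hl).invertible
  apply inv_mulVec_eq_vec
  rw [mulVec_smul, calA1_sub_smul_mulVec_psiM_pow k hl]
  ext
  simp [onesV, sub_ne_zero.mpr hl.symm]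

theorem A1_sub_smul_eq_kronecker (m n : ℕ) (l : ℂ) :
    A1 m n - l • 1 = (calA1 n - l • 1) ⊗ₖ (1 : Matrix (Fin m) (Fin m) ℂ) := by
  ext r c
  by_cases h : r.2 = c.2 <;>
    simp [A1, calA1, one_apply, Prod.ext_iff, h]

theorem A2_sub_smul_eq_kronecker (m n : ℕ) (l : ℂ) :
    A2 m n - l • 1 = (1 : Matrix (Fin n) (Fin n) ℂ) ⊗ₖ (calA2 m - l • 1) := by
  ext r c
  by_cases h : r.1 = c.1 <;>
    simp [A2, calA2, one_apply, Prod.ext_iff, h, mul_sub]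

theorem kronecker_mulVec_mul {R l m n p : Type*} [CommSemiring R] [Fintype m] [Fintype p]
    (A : Matrix l m R) (B : Matrix n p R) (v : m → R) (w : p → R) :
    (A ⊗ₖ B) *ᵥ (fun c => v c.1 * w c.2) = fun r => (A *ᵥ v) r.1 * (B *ᵥ w) r.2 := by
  ext r
  simp only [mulVec, dotProduct, Fintype.sum_prod_type, Finset.sum_mul_sum]
  exact Finset.sum_congr rfl fun _ _ => Finset.sum_congr rfl fun _ _ => mul_mul_mul_comm ..

theorem A2_A1_sub_smul_inv_mulVec_onesV (m n : ℕ) {l1 l2 : ℂ}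
    (hl1 : l1 ≠ Complex.I / 2) (hl2 : l2 ≠ Complex.I / 2) :
    (A2 m n - l2 • 1)⁻¹ *ᵥ ((A1 m n - l1 • 1)⁻¹ *ᵥ onesV (Fin n × Fin m))
      = ((Complex.I / 2 - l1) * (Complex.I / 2 - l2))⁻¹ • hVec m n (psiM l1) (psiM l2) := by
  have ones : onesV (Fin n × Fin m) = fun c => onesV (Fin n) c.1 * onesV (Fin m) c.2 := by
    ext; simp [onesV]
  rw [A1_sub_smul_eq_kronecker, A2_sub_smul_eq_kronecker, inv_kronecker, inv_kronecker,
    inv_one, inv_one, ones, kronecker_mulVec_mul, one_mulVec, kronecker_mulVec_mul, one_mulVec,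
    calA1_sub_smul_inv_mulVec_onesV n hl1, show calA2 m = calA1 m from rfl,
    calA1_sub_smul_inv_mulVec_onesV m hl2]
  ext
  simp only [Pi.smul_apply, smul_eq_mul, hVec, mul_inv]
  ring

theorem inv_conjTranspose_sub_smul_one {ι R : Type*} [Fintype ι] [DecidableEq ι] [CommRing R]
    [StarRing R] (A : Matrix ι ι R) (u : R) :
    (Aᴴ - u • 1)⁻¹ = (A - star u • 1)⁻¹ᴴ := by
  rw [conjTranspose_nonsing_inv, conjTranspose_sub, conjTranspose_smul, star_star,
    conjTranspose_one]

theorem omegaF_eq_star_dotProduct (m n : ℕ) (t : ℤ → ℤ → ℂ) (l1 l2 u1 u2 : ℂ) :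
    omegaF m n t l1 l2 u1 u2
      = star ((A2 m n - star u2 • 1)⁻¹ *ᵥ ((A1 m n - star u1 • 1)⁻¹ *ᵥ onesV _)) ⬝ᵥ
          ((TBT m n t)⁻¹ *ᵥ ((A2 m n - l2 • 1)⁻¹ *ᵥ ((A1 m n - l1 • 1)⁻¹ *ᵥ onesV _))) := by
  simp only [omegaF, inv_conjTranspose_sub_smul_one, ← mulVec_mulVec]
  rw [dotProduct_mulVec, dotProduct_mulVec, ← star_mulVec, ← star_mulVec]

theorem star_ne_I_div_two {u : ℂ} (hu : u ≠ -(Complex.I / 2)) : star u ≠ Complex.I / 2 := by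
  contrapose! hu
  rw [← star_star u, hu]
  norm_num [Complex.ext_iff]

theorem star_I_div_two_sub_star (u : ℂ) :
    star (Complex.I / 2 - star u) = -(Complex.I / 2 + u) := by
  rw [star_sub, star_star, star_div₀, Complex.star_def, Complex.conj_I, map_ofNat]
  ring

theorem rho_via_omega_general (m n : ℕ) (t : ℤ → ℤ → ℂ) (l1 l2 u1 u2 : ℂ)
    (hl1 : l1 ≠ Complex.I / 2) (hl2 : l2 ≠ Complex.I / 2)
    (hu1 : u1 ≠ -(Complex.I / 2)) (hu2 : u2 ≠ -(Complex.I / 2)) :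
    rhoF m n t (psiM l1) (psiM l2)
        ((starRingEnd ℂ) (psiM ((starRingEnd ℂ) u1)))
        ((starRingEnd ℂ) (psiM ((starRingEnd ℂ) u2)))
      = (Complex.I / 2 + u2) * (Complex.I / 2 + u1) * (Complex.I / 2 - l2) *
          (Complex.I / 2 - l1) * omegaF m n t l1 l2 u1 u2 := by
  rw [omegaF_eq_star_dotProduct, A2_A1_sub_smul_inv_mulVec_onesV m n hl1 hl2,
    A2_A1_sub_smul_inv_mulVec_onesV m n (star_ne_I_div_two hu1) (star_ne_I_div_two hu2),
    rhoF, Complex.conj_conj, Complex.conj_conj]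
  simp only [mulVec_smul, dotProduct_smul, star_smul, smul_dotProduct, smul_eq_mul,
    starRingEnd_apply, star_inv₀, star_mul', star_I_div_two_sub_star]
  have hu1' : Complex.I / 2 + u1 ≠ 0 := fun h => hu1 (by linear_combination h)
  have hu2' : Complex.I / 2 + u2 ≠ 0 := fun h => hu2 (by linear_combination h)
  have hl1' : Complex.I / 2 - l1 ≠ 0 := sub_ne_zero.mpr hl1.symm
  have hl2' : Complex.I / 2 - l2 ≠ 0 := sub_ne_zero.mpr hl2.symm
  generalize Complex.I / 2 + u1 = a1 at hu1' ⊢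
  generalize Complex.I / 2 + u2 = a2 at hu2' ⊢
  generalize Complex.I / 2 - l1 = b1 at hl1' ⊢
  generalize Complex.I / 2 - l2 = b2 at hl2' ⊢
  field_simp

/-- the relation between `ρ` and `ω`. -/
theorem rho_via_omega (m n : ℕ) (hm : 0 < m) (hn : 0 < n) (t : ℤ → ℤ → ℂ)
    (hT : IsUnit (TBT m n t)) (l1 l2 u1 u2 : ℂ)
    (hl1 : l1 ≠ Complex.I / 2) (hl2 : l2 ≠ Complex.I / 2)
    (hu1 : u1 ≠ -(Complex.I / 2)) (hu2 : u2 ≠ -(Complex.I / 2)) :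
    rhoF m n t (psiM l1) (psiM l2)
        ((starRingEnd ℂ) (psiM ((starRingEnd ℂ) u1)))
        ((starRingEnd ℂ) (psiM ((starRingEnd ℂ) u2)))
      = (Complex.I / 2 + u2) * (Complex.I / 2 + u1) * (Complex.I / 2 - l2) *
          (Complex.I / 2 - l1) * omegaF m n t l1 l2 u1 u2 :=
  rho_via_omega_general m n t l1 l2 u1 u2 hl1 hl2 hu1 hu2

end
end
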